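/- arXiv:0905.1854 — 2 statements merged into one kernel-verified Lean document; each statement's English description precedes it below -/
import Mathlib

section
/- For the Sabra shell model bilinear operator B, the identity (B(u,u), Au) = 0 holds for all u in V if and only if a + bμ² = (a + b)μ⁴, equivalently a(1+μ²) + bμ² = 0 (using μ ≠ 1). -/
open scoped ComplexConjugate

noncomputable def kseq (k0 μ : ℝ) (n : ℕ) : ℝ := k0 * μ ^ n

/-- The Sabra shell model bilinear operator. -/
noncomputable def sabraB (k0 μ a b : ℝ) (u v : ℕ → ℂ) (n : ℕ) : ℂ :=
  -Complex.I *
    ( ((a * kseq k0 μ (n+1) : ℝ) : ℂ) * conj (u (n+1)) * v (n+2)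
    + ((b * kseq k0 μ n : ℝ) : ℂ) * conj (u (n-1)) * v (n+1)
    + ((a * kseq k0 μ (n-1) : ℝ) : ℂ) * u (n-1) * v (n-2)
    + ((b * kseq k0 μ (n-1) : ℝ) : ℂ) * u (n-2) * v (n-1) )

noncomputable def pairH (x y : ℕ → ℂ) : ℝ := ∑' n : ℕ, (x (n+1) * conj (y (n+1))).re

def memV (k0 μ : ℝ) (u : ℕ → ℂ) : Prop :=
  Summable (fun n : ℕ => (kseq k0 μ (n+1))^2 * ‖u (n+1)‖^2)

noncomputable def opA (k0 μ : ℝ) (u : ℕ → ℂ) (n : ℕ) : ℂ :=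
  (((kseq k0 μ n)^2 : ℝ) : ℂ) * u n

noncomputable def wfn (u : ℕ → ℂ) (m : ℕ) : ℝ :=
  (conj (u m) * conj (u (m+1)) * u (m+2)).im

noncomputable def Pfn (k0 μ a : ℝ) (u : ℕ → ℂ) (m : ℕ) : ℝ :=
  a * ((kseq k0 μ m)^2 * kseq k0 μ (m+1)) * wfn u m

noncomputable def Qfn (k0 μ b : ℝ) (u : ℕ → ℂ) : ℕ → ℝ
  | 0 => 0
  | m+1 => b * (kseq k0 μ (m+1))^3 * wfn u m

noncomputable def Rfn (k0 μ a b : ℝ) (u : ℕ → ℂ) : ℕ → ℝ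
  | 0 => 0
  | 1 => 0
  | m+2 => -(a+b) * ((kseq k0 μ (m+2))^2 * kseq k0 μ (m+1)) * wfn u m

lemma f_eq (k0 μ a b : ℝ) (u : ℕ → ℂ) (hu0 : u 0 = 0) (m : ℕ) :
    (sabraB k0 μ a b u u m * conj (opA k0 μ u m)).re
      = Pfn k0 μ a u m + Qfn k0 μ b u m + Rfn k0 μ a b u m := by
  match m with
  | 0 =>
    simp [sabraB, opA, wfn, Pfn, Qfn, Rfn, hu0]
  | 1 =>
    simp only [sabraB, opA, wfn, Pfn, Qfn, Rfn, ← Complex.ofReal_pow]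
    simp only [show (1:ℕ)-1 = 0 from rfl, show (1:ℕ)-2 = 0 from rfl, hu0]
    simp only [Complex.mul_re, Complex.mul_im, Complex.add_re, Complex.add_im,
      Complex.neg_re, Complex.neg_im, Complex.I_re, Complex.I_im, Complex.zero_re,
      Complex.zero_im, Complex.conj_re, Complex.conj_im, Complex.ofReal_re, Complex.ofReal_im,
      map_zero]
    ring
  | m+2 =>
    show (sabraB k0 μ a b u u (m+2) * conj (opA k0 μ u (m+2))).re
      = Pfn k0 μ a u (m+2) + Qfn k0 μ b u (m+2) + Rfn k0 μ a b u (m+2)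
    simp only [sabraB, opA, wfn, Pfn, Qfn, Rfn, kseq, ← Complex.ofReal_pow]
    simp only [show m+2-1 = m+1 from rfl, show m+2-2 = m from rfl]
    simp only [Complex.mul_re, Complex.mul_im, Complex.add_re, Complex.add_im,
      Complex.neg_re, Complex.neg_im, Complex.I_re, Complex.I_im,
      Complex.conj_re, Complex.conj_im, Complex.ofReal_re, Complex.ofReal_im]
    ring

lemma kseq_pos (k0 μ : ℝ) (hk0 : 0 < k0) (hμ : 1 < μ) (n : ℕ) : 0 < kseq k0 μ n := by
  have : 0 < μ := lt_trans one_pos hμ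
  exact mul_pos hk0 (pow_pos this n)

lemma sum_sq (k0 μ : ℝ) (u : ℕ → ℂ) (hu0 : u 0 = 0)
    (hV : Summable (fun n : ℕ => (kseq k0 μ (n+1))^2 * ‖u (n+1)‖^2)) :
    Summable (fun n : ℕ => (kseq k0 μ n * ‖u n‖)^2) := by
  have : Summable (fun n : ℕ => (kseq k0 μ (n+1) * ‖u (n+1)‖)^2) := by
    simpa [mul_pow] using hV
  exact (summable_nat_add_iff 1).mp this

lemma sum_w (k0 μ : ℝ) (hk0 : 0 < k0) (hμ : 1 < μ) (u : ℕ → ℂ) (hu0 : u 0 = 0)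
    (hV : Summable (fun n : ℕ => (kseq k0 μ (n+1))^2 * ‖u (n+1)‖^2)) :
    Summable (fun m : ℕ => (kseq k0 μ m)^3 * |wfn u m|) := by
  set s : ℕ → ℝ := fun n => kseq k0 μ n * ‖u n‖ with hs
  have hs0 : ∀ n, 0 ≤ s n := fun n =>
    mul_nonneg (kseq_pos k0 μ hk0 hμ n).le (norm_nonneg _)
  have hsq : Summable (fun n => (s n)^2) := sum_sq k0 μ u hu0 hV
  set C : ℝ := Real.sqrt (∑' n, (s n)^2) with hC
  have hCn : 0 ≤ C := Real.sqrt_nonneg _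
  have hsC : ∀ n, s n ≤ C := by
    intro n
    have h1 : (s n)^2 ≤ ∑' n, (s n)^2 :=
      Summable.le_tsum hsq n (fun j _ => sq_nonneg _)
    have h2 := Real.sqrt_le_sqrt h1
    rwa [Real.sqrt_sq (hs0 n)] at h2
  -- monotonicity of kseq
  have hmono : ∀ m j : ℕ, m ≤ j → kseq k0 μ m ≤ kseq k0 μ j := by
    intro m j hmj
    exact mul_le_mul_of_nonneg_left
      (pow_le_pow_right₀ (le_of_lt hμ) hmj) hk0.le
  have hbound : ∀ m, (kseq k0 μ m)^3 * |wfn u m| ≤ C * ((s m)^2 + (s (m+1))^2) / 2 := by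
    intro m
    have hw : |wfn u m| ≤ ‖u m‖ * ‖u (m+1)‖ * ‖u (m+2)‖ := by
      have := Complex.abs_im_le_norm (conj (u m) * conj (u (m+1)) * u (m+2))
      simpa [map_mul, wfn] using this
    have hk : (kseq k0 μ m)^3 ≤ kseq k0 μ m * kseq k0 μ (m+1) * kseq k0 μ (m+2) := by
      have h1 := hmono m (m+1) (by omega)
      have h2 := hmono m (m+2) (by omega)
      have hp := (kseq_pos k0 μ hk0 hμ m)
      calc (kseq k0 μ m)^3 = (kseq k0 μ m * kseq k0 μ m) * kseq k0 μ m := by ring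
        _ ≤ (kseq k0 μ m * kseq k0 μ (m+1)) * kseq k0 μ (m+2) :=
          mul_le_mul (mul_le_mul_of_nonneg_left h1 hp.le) h2 hp.le
            (mul_nonneg hp.le (kseq_pos k0 μ hk0 hμ (m+1)).le)
    have step1 : (kseq k0 μ m)^3 * |wfn u m| ≤ s m * s (m+1) * s (m+2) := by
      have hkp := (kseq_pos k0 μ hk0 hμ m).le
      have h1 : (kseq k0 μ m)^3 * |wfn u m|
          ≤ (kseq k0 μ m * kseq k0 μ (m+1) * kseq k0 μ (m+2)) * (‖u m‖ * ‖u (m+1)‖ * ‖u (m+2)‖) := by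
        exact mul_le_mul hk hw (abs_nonneg _)
          (mul_nonneg (mul_nonneg hkp (kseq_pos k0 μ hk0 hμ (m+1)).le)
            (kseq_pos k0 μ hk0 hμ (m+2)).le)
      calc (kseq k0 μ m)^3 * |wfn u m| ≤ _ := h1
        _ = s m * s (m+1) * s (m+2) := by simp only [hs]; ring
    have step2 : s m * s (m+1) * s (m+2) ≤ C * (s m * s (m+1)) :=  by
      rw [mul_comm (C) _]
      exact mul_le_mul_of_nonneg_left (hsC _) (mul_nonneg (hs0 m) (hs0 (m+1)))
    have step3 : s m * s (m+1) ≤ ((s m)^2 + (s (m+1))^2) / 2 := by nlinarith [sq_nonneg (s m - s (m+1))]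
    calc (kseq k0 μ m)^3 * |wfn u m| ≤ C * (s m * s (m+1)) := step1.trans step2
      _ ≤ C * ((s m)^2 + (s (m+1))^2) / 2 := by
          rw [mul_div_assoc]
          exact mul_le_mul_of_nonneg_left step3 hCn
  have hgsum : Summable (fun m : ℕ => C * ((s m)^2 + (s (m+1))^2) / 2) := by
    have h2 : Summable (fun m : ℕ => (s (m+1))^2) := (summable_nat_add_iff 1).mpr hsq
    exact ((hsq.add h2).mul_left C).div_const 2
  exact hgsum.of_nonneg_of_le
    (fun m => mul_nonneg (pow_nonneg (kseq_pos k0 μ hk0 hμ m).le 3) (abs_nonneg _)) hbound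

lemma kseq_succ (k0 μ : ℝ) (m : ℕ) : kseq k0 μ (m+1) = μ * kseq k0 μ m := by
  simp [kseq, pow_succ]; ring

lemma key (k0 μ a b : ℝ) (hk0 : 0 < k0) (hμ : 1 < μ) (u : ℕ → ℂ) (hu0 : u 0 = 0)
    (hV : Summable (fun n : ℕ => (kseq k0 μ (n+1))^2 * ‖u (n+1)‖^2)) :
    (∑' n : ℕ, (sabraB k0 μ a b u u (n+1) * conj (opA k0 μ u (n+1))).re)
      = ∑' m : ℕ, ((a + b*μ^2 - (a+b)*μ^4) * (kseq k0 μ (m+1) * (kseq k0 μ m)^2)) * wfn u m := by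
  have hμ0 : (0:ℝ) < μ := lt_trans one_pos hμ
  have hW := sum_w k0 μ hk0 hμ u hu0 hV
  have hknn : ∀ m, (0:ℝ) ≤ kseq k0 μ m := fun m => (kseq_pos k0 μ hk0 hμ m).le
  set Q' : ℕ → ℝ := fun m => b * (kseq k0 μ (m+1))^3 * wfn u m with hQ'def
  set R' : ℕ → ℝ := fun m => -(a+b) * ((kseq k0 μ (m+2))^2 * kseq k0 μ (m+1)) * wfn u m with hR'def
  have hP : Summable (Pfn k0 μ a u) := by
    apply Summable.of_norm_bounded (hW.mul_left (|a| * μ))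
    intro m
    simp only [Pfn, Real.norm_eq_abs, abs_mul, kseq_succ,
      abs_of_nonneg (hknn m), abs_of_nonneg (mul_nonneg (hknn m) (hknn m)),
      abs_of_nonneg hμ0.le, abs_of_nonneg (sq_nonneg (kseq k0 μ m))]
    apply le_of_eq; ring
  have hQ' : Summable Q' := by
    apply Summable.of_norm_bounded (hW.mul_left (|b| * μ^3))
    intro m
    simp only [hQ'def, Real.norm_eq_abs, abs_mul, kseq_succ, abs_pow,
      abs_of_nonneg (hknn m), abs_of_nonneg hμ0.le]
    apply le_of_eq; ring
  have hR' : Summable R' := by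
    apply Summable.of_norm_bounded (hW.mul_left (|a+b| * μ^5))
    intro m
    simp only [hR'def, Real.norm_eq_abs, abs_mul, kseq_succ, abs_pow, abs_neg,
      abs_of_nonneg (hknn m), abs_of_nonneg hμ0.le]
    apply le_of_eq; ring
  have hQ : Summable (Qfn k0 μ b u) := by
    apply (summable_nat_add_iff 1).mp
    exact hQ'
  have hR : Summable (Rfn k0 μ a b u) := by
    apply (summable_nat_add_iff 2).mp
    exact hR'
  have hfe : (fun m => (sabraB k0 μ a b u u m * conj (opA k0 μ u m)).re)
      = fun m => Pfn k0 μ a u m + Qfn k0 μ b u m + Rfn k0 μ a b u m :=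
    funext (f_eq k0 μ a b u hu0)
  have hf : Summable (fun m => (sabraB k0 μ a b u u m * conj (opA k0 μ u m)).re) := by
    rw [hfe]; exact (hP.add hQ).add hR
  have hw0 : wfn u 0 = 0 := by simp [wfn, hu0]
  have hf0 : (sabraB k0 μ a b u u 0 * conj (opA k0 μ u 0)).re = 0 := by
    rw [f_eq k0 μ a b u hu0 0]
    simp [Pfn, Qfn, Rfn, hw0]
  have hshift : (∑' n : ℕ, (sabraB k0 μ a b u u (n+1) * conj (opA k0 μ u (n+1))).re)
      = ∑' m : ℕ, (sabraB k0 μ a b u u m * conj (opA k0 μ u m)).re := by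
    rw [Summable.tsum_eq_zero_add hf, hf0, zero_add]
  rw [hshift, hfe, Summable.tsum_add (hP.add hQ) hR, Summable.tsum_add hP hQ]
  have hsQ : ∑' m, Qfn k0 μ b u m = ∑' m, Q' m := by
    rw [Summable.tsum_eq_zero_add hQ]
    simp only [Qfn, zero_add]; rfl
  have hsR : ∑' m, Rfn k0 μ a b u m = ∑' m, R' m := by
    rw [Summable.tsum_eq_zero_add hR]
    have hR1 : Summable (fun n => Rfn k0 μ a b u (n+1)) := (summable_nat_add_iff 1).mpr hR
    rw [Summable.tsum_eq_zero_add hR1]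
    simp only [Rfn, zero_add]; rfl
  rw [hsQ, hsR, ← Summable.tsum_add hP hQ', ← Summable.tsum_add (hP.add hQ') hR']
  apply tsum_congr
  intro m
  simp only [Pfn, hQ'def, hR'def, kseq_succ]
  ring

/-- For the Sabra model, `(B(u,u), Au) = 0` for all `u ∈ V` iff
`a + bμ² = (a+b)μ⁴`, which in turn (since `μ ≠ 1`) is equivalent to
`a(1+μ²) + bμ² = 0`. -/
theorem sabra_energy_identity_iff (k0 μ a b : ℝ) (hk0 : 0 < k0) (hμ : 1 < μ) :
    ((∀ u : ℕ → ℂ, u 0 = 0 → memV k0 μ u →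
        pairH (sabraB k0 μ a b u u) (opA k0 μ u) = 0) ↔
      a + b*μ^2 = (a+b)*μ^4) ∧
    (a + b*μ^2 = (a+b)*μ^4 ↔ a*(1+μ^2) + b*μ^2 = 0) := by
  constructor
  · constructor
    · intro h
      set u₀ : ℕ → ℂ := fun n =>
        if n = 1 then 1 else if n = 2 then 1 else if n = 3 then Complex.I else 0 with hu₀def
      have hu0 : u₀ 0 = 0 := by simp [hu₀def]
      have hmem : memV k0 μ u₀ := by
        apply summable_of_ne_finset_zero (s := Finset.range 3)
        intro n hn
        rw [Finset.mem_range, not_lt] at hn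
        have h0 : u₀ (n+1) = 0 := by
          simp only [hu₀def]
          rw [if_neg (by omega), if_neg (by omega), if_neg (by omega)]
        simp [h0]
      have hz := h u₀ hu0 hmem
      unfold pairH at hz
      rw [key k0 μ a b hk0 hμ u₀ hu0 hmem] at hz
      have hw1 : wfn u₀ 1 = 1 := by
        simp [wfn, hu₀def]
      have hwz : ∀ m : ℕ, m ≠ 1 →
          ((a + b*μ^2 - (a+b)*μ^4) * (kseq k0 μ (m+1) * (kseq k0 μ m)^2)) * wfn u₀ m = 0 := by
        intro m hm
        have hw : wfn u₀ m = 0 := by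
          match m with
          | 0 => simp [wfn, hu0]
          | 1 => exact absurd rfl hm
          | m+2 =>
            have h0 : u₀ (m+2+2) = 0 := by
              simp only [hu₀def]
              rw [if_neg (by omega), if_neg (by omega), if_neg (by omega)]
            simp [wfn, h0]
        rw [hw, mul_zero]
      rw [tsum_eq_single 1 hwz, hw1, mul_one] at hz
      have hkpos : 0 < kseq k0 μ 2 * (kseq k0 μ 1)^2 :=
        mul_pos (kseq_pos k0 μ hk0 hμ 2) (pow_pos (kseq_pos k0 μ hk0 hμ 1) 2)
      have hc : a + b*μ^2 - (a+b)*μ^4 = 0 := by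
        rcases mul_eq_zero.mp hz with h1 | h1
        · exact h1
        · exact absurd h1 (ne_of_gt hkpos)
      linarith
    · intro hc u hu0 hmem
      unfold pairH
      rw [key k0 μ a b hk0 hμ u hu0 hmem]
      have h0 : a + b*μ^2 - (a+b)*μ^4 = 0 := by linarith
      simp [h0]
  · have hne : (1 - μ^2) ≠ 0 := by nlinarith
    constructor
    · intro h
      have hz : (1 - μ^2) * (a*(1+μ^2) + b*μ^2) = 0 := by linear_combination h
      rcases mul_eq_zero.mp hz with h1 | h1
      · exact absurd h1 hne
      · exact h1
    · intro h
      linear_combination (1 - μ^2) * h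
end

section
/- For any α in [0, 1/2] there is a constant C such that for all u, v in V, |(A^α B(u,u) − A^α B(v,v), A^α(u−v))| ≤ C ‖u−v‖_α² (‖u‖ + ‖v‖). -/
open scoped ComplexConjugate

/-- The GOY shell model bilinear operator (componentwise, with the convention
`u 0 = 0` playing the role of `u_0 = u_{-1} = 0`; truncated subtraction on `ℕ`
sends the out-of-range indices to `0`). -/
noncomputable def goyB (k0 μ a b : ℝ) (u v : ℕ → ℂ) (n : ℕ) : ℂ :=
  -Complex.I *
    ( ((a * kseq k0 μ (n+1) : ℝ) : ℂ) * conj (u (n+1)) * conj (v (n+2))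
    + ((b * kseq k0 μ n : ℝ) : ℂ) * conj (u (n-1)) * conj (v (n+1))
    - ((a * kseq k0 μ (n-1) : ℝ) : ℂ) * conj (u (n-1)) * conj (v (n-2))
    - ((b * kseq k0 μ (n-1) : ℝ) : ℂ) * conj (u (n-2)) * conj (v (n-1)) )

/-- `|u|² = Σ_{n≥1} |u_n|²`. -/
noncomputable def hSq (u : ℕ → ℂ) : ℝ := ∑' n : ℕ, ‖u (n+1)‖^2

/-- `‖u‖² = Σ_{n≥1} k_n² |u_n|²`. -/
noncomputable def vSq (k0 μ : ℝ) (u : ℕ → ℂ) : ℝ :=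
  ∑' n : ℕ, (kseq k0 μ (n+1))^2 * ‖u (n+1)‖^2

/-- `u ∈ H`. -/
def memH (u : ℕ → ℂ) : Prop := Summable (fun n : ℕ => ‖u (n+1)‖^2)

/-- `(A^α w)_n = k_n^{2α} w_n` (real exponent). -/
noncomputable def opAalpha (k0 μ α : ℝ) (w : ℕ → ℂ) (n : ℕ) : ℂ :=
  (((kseq k0 μ n) ^ (2*α) : ℝ) : ℂ) * w n

/-- `‖w‖_α² = Σ_{n≥1} k_n^{4α} |w_n|²`. -/
noncomputable def aSq (k0 μ α : ℝ) (u : ℕ → ℂ) : ℝ :=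
  ∑' n : ℕ, (kseq k0 μ (n+1)) ^ (4*α) * ‖u (n+1)‖^2

lemma kpos {k0 μ : ℝ} (hk0 : 0 < k0) (hμ : 1 < μ) (n : ℕ) : 0 < kseq k0 μ n :=
  mul_pos hk0 (pow_pos (lt_trans one_pos hμ) n)

lemma kle {k0 μ : ℝ} (hk0 : 0 < k0) (hμ : 1 < μ) {i j : ℕ} (h : i ≤ j + 2) :
    kseq k0 μ i ≤ μ^2 * kseq k0 μ j := by
  have h1 : (1:ℝ) ≤ μ := le_of_lt hμ
  have hp : μ ^ i ≤ μ ^ (j+2) := pow_le_pow_right₀ h1 h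
  calc kseq k0 μ i = k0 * μ ^ i := rfl
    _ ≤ k0 * μ ^ (j+2) := by nlinarith
    _ = μ^2 * kseq k0 μ j := by unfold kseq; ring

lemma prod_diff_norm (x1 x2 y1 y2 : ℂ) :
    ‖x1*x2 - y1*y2‖ ≤ ‖x1‖*‖x2-y2‖ + ‖x1-y1‖*‖y2‖ := by
  have h : x1*x2 - y1*y2 = x1*(x2-y2) + (x1-y1)*y2 := by ring
  rw [h]
  calc ‖x1*(x2-y2) + (x1-y1)*y2‖ ≤ ‖x1*(x2-y2)‖ + ‖(x1-y1)*y2‖ := norm_add_le _ _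
    _ = ‖x1‖*‖x2-y2‖ + ‖x1-y1‖*‖y2‖ := by rw [norm_mul, norm_mul]

lemma coef_bound {k0 μ : ℝ} (hk0 : 0 < k0) (hμ : 1 < μ) {u : ℕ → ℂ}
    (hu0 : u 0 = 0) (hu : memV k0 μ u) (j : ℕ) :
    kseq k0 μ j * ‖u j‖ ≤ Real.sqrt (vSq k0 μ u) := by
  cases j with
  | zero => simp [hu0]
  | succ m =>
    have hterm : (kseq k0 μ (m+1))^2 * ‖u (m+1)‖^2 ≤ vSq k0 μ u := by
      apply Summable.le_tsum hu m
      intro j _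
      positivity
    have h2 := Real.sqrt_le_sqrt hterm
    rwa [Real.sqrt_mul (sq_nonneg _), Real.sqrt_sq (le_of_lt (kpos hk0 hμ (m+1))),
      Real.sqrt_sq (norm_nonneg _)] at h2

lemma kmul_bound {k0 μ : ℝ} (hk0 : 0 < k0) (hμ : 1 < μ) {u : ℕ → ℂ}
    (hu0 : u 0 = 0) (hu : memV k0 μ u) {i j : ℕ} (h : i ≤ j + 2) :
    kseq k0 μ i * ‖u j‖ ≤ μ^2 * Real.sqrt (vSq k0 μ u) := by
  have h1 : kseq k0 μ i * ‖u j‖ ≤ μ^2 * kseq k0 μ j * ‖u j‖ := by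
    have := kle hk0 hμ h
    have := norm_nonneg (u j)
    nlinarith
  have h2 := coef_bound hk0 hμ hu0 hu j
  have hμ2 : (0:ℝ) < μ^2 := by positivity
  nlinarith

lemma term_bound {k0 μ : ℝ} (hk0 : 0 < k0) (hμ : 1 < μ) {u v : ℕ → ℂ}
    (hu0 : u 0 = 0) (hv0 : v 0 = 0) (hu : memV k0 μ u) (hv : memV k0 μ v)
    (c : ℝ) (i p q : ℕ) (hp : i ≤ p + 2) (hq : i ≤ q + 2) :
    ‖((c * kseq k0 μ i : ℝ):ℂ) * (conj (u p * u q) - conj (v p * v q))‖ ≤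
      |c| * (μ^2 * (Real.sqrt (vSq k0 μ u) + Real.sqrt (vSq k0 μ v)))
        * (‖u q - v q‖ + ‖u p - v p‖) := by
  have h1 : ‖((c * kseq k0 μ i : ℝ):ℂ) * (conj (u p * u q) - conj (v p * v q))‖
      = |c| * kseq k0 μ i * ‖u p * u q - v p * v q‖ := by
    rw [norm_mul, ← map_sub, RCLike.norm_conj, Complex.norm_real, Real.norm_eq_abs,
      abs_mul, abs_of_pos (kpos hk0 hμ i)]
  rw [h1]
  have h2 := prod_diff_norm (u p) (u q) (v p) (v q)
  have h3 : kseq k0 μ i * ‖u p‖ ≤ μ^2 * Real.sqrt (vSq k0 μ u) :=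
    kmul_bound hk0 hμ hu0 hu hp
  have h4 : kseq k0 μ i * ‖v q‖ ≤ μ^2 * Real.sqrt (vSq k0 μ v) :=
    kmul_bound hk0 hμ hv0 hv hq
  have hk := kpos hk0 hμ i
  have n1 := norm_nonneg (u p)
  have n2 := norm_nonneg (v q)
  have n3 := norm_nonneg (u q - v q)
  have n4 := norm_nonneg (u p - v p)
  have sU : 0 ≤ Real.sqrt (vSq k0 μ u) := Real.sqrt_nonneg _
  have sV : 0 ≤ Real.sqrt (vSq k0 μ v) := Real.sqrt_nonneg _
  have ha : 0 ≤ |c| := abs_nonneg c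
  nlinarith [mul_le_mul_of_nonneg_right h3 n3, mul_le_mul_of_nonneg_right h4 n4,
    mul_le_mul_of_nonneg_left h2 (mul_nonneg ha (le_of_lt hk)),
    mul_nonneg (mul_nonneg ha sU) n4, mul_nonneg (mul_nonneg ha sV) n3,
    mul_nonneg ha (mul_nonneg sU n3), mul_nonneg ha (mul_nonneg sV n4)]

lemma Dbound {k0 μ a b : ℝ} (hk0 : 0 < k0) (hμ : 1 < μ) {u v : ℕ → ℂ}
    (hu0 : u 0 = 0) (hv0 : v 0 = 0) (hu : memV k0 μ u) (hv : memV k0 μ v) (n : ℕ) :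
    ‖goyB k0 μ a b u u n - goyB k0 μ a b v v n‖ ≤
      4 * (|a|+|b|+1) * (μ^2 * (Real.sqrt (vSq k0 μ u) + Real.sqrt (vSq k0 μ v)))
        * (‖u (n-2) - v (n-2)‖ + ‖u (n-1) - v (n-1)‖
           + ‖u (n+1) - v (n+1)‖ + ‖u (n+2) - v (n+2)‖) := by
  set c1 : ℂ := ((a * kseq k0 μ (n+1) : ℝ):ℂ)
  set c2 : ℂ := ((b * kseq k0 μ n : ℝ):ℂ)
  set c3 : ℂ := ((a * kseq k0 μ (n-1) : ℝ):ℂ)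
  set c4 : ℂ := ((b * kseq k0 μ (n-1) : ℝ):ℂ)
  set z1 : ℂ := c1 * (conj (u (n+1) * u (n+2)) - conj (v (n+1) * v (n+2)))
  set z2 : ℂ := c2 * (conj (u (n-1) * u (n+1)) - conj (v (n-1) * v (n+1)))
  set z3 : ℂ := c3 * (conj (u (n-1) * u (n-2)) - conj (v (n-1) * v (n-2)))
  set z4 : ℂ := c4 * (conj (u (n-2) * u (n-1)) - conj (v (n-2) * v (n-1)))
  have hD : goyB k0 μ a b u u n - goyB k0 μ a b v v n
      = -Complex.I * (z1 + z2 - z3 - z4) := by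
    simp only [goyB, z1, z2, z3, z4, c1, c2, c3, c4, map_mul]
    ring
  have hnorm : ‖goyB k0 μ a b u u n - goyB k0 μ a b v v n‖
      ≤ ‖z1‖ + ‖z2‖ + ‖z3‖ + ‖z4‖ := by
    rw [hD, norm_mul]
    have : ‖-Complex.I‖ = 1 := by simp
    rw [this, one_mul]
    calc ‖z1 + z2 - z3 - z4‖ ≤ ‖z1 + z2 - z3‖ + ‖z4‖ := norm_sub_le _ _
      _ ≤ ‖z1 + z2‖ + ‖z3‖ + ‖z4‖ := by linarith [norm_sub_le (z1+z2) z3]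
      _ ≤ ‖z1‖ + ‖z2‖ + ‖z3‖ + ‖z4‖ := by linarith [norm_add_le z1 z2]
  set S := Real.sqrt (vSq k0 μ u) + Real.sqrt (vSq k0 μ v) with hS
  have hSnn : 0 ≤ S := add_nonneg (Real.sqrt_nonneg _) (Real.sqrt_nonneg _)
  set MS := μ^2 * S with hMS
  have hMSnn : 0 ≤ MS := mul_nonneg (by positivity) hSnn
  set W : ℕ → ℝ := fun j => ‖u j - v j‖ with hW
  have hWnn : ∀ j, 0 ≤ W j := fun j => norm_nonneg _
  have hQ : 0 ≤ W (n-2) + W (n-1) + W (n+1) + W (n+2) := by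
    have := hWnn (n-2); have := hWnn (n-1); have := hWnn (n+1); have := hWnn (n+2)
    linarith
  have h1 : ‖z1‖ ≤ |a| * MS * (W (n+2) + W (n+1)) :=
    term_bound hk0 hμ hu0 hv0 hu hv a (n+1) (n+1) (n+2) (by omega) (by omega)
  have h2 : ‖z2‖ ≤ |b| * MS * (W (n+1) + W (n-1)) :=
    term_bound hk0 hμ hu0 hv0 hu hv b n (n-1) (n+1) (by omega) (by omega)
  have h3 : ‖z3‖ ≤ |a| * MS * (W (n-2) + W (n-1)) :=
    term_bound hk0 hμ hu0 hv0 hu hv a (n-1) (n-1) (n-2) (by omega) (by omega)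
  have h4 : ‖z4‖ ≤ |b| * MS * (W (n-1) + W (n-2)) :=
    term_bound hk0 hμ hu0 hv0 hu hv b (n-1) (n-2) (n-1) (by omega) (by omega)
  have ha : 0 ≤ |a| := abs_nonneg a
  have hb : 0 ≤ |b| := abs_nonneg b
  have key : ‖z1‖ + ‖z2‖ + ‖z3‖ + ‖z4‖
      ≤ 4 * (|a|+|b|+1) * MS * (W (n-2) + W (n-1) + W (n+1) + W (n+2)) := by
    nlinarith [mul_nonneg hMSnn (hWnn (n-2)), mul_nonneg hMSnn (hWnn (n-1)),
      mul_nonneg hMSnn (hWnn (n+1)), mul_nonneg hMSnn (hWnn (n+2)),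
      mul_nonneg hMSnn hQ]
  calc ‖goyB k0 μ a b u u n - goyB k0 μ a b v v n‖
      ≤ ‖z1‖ + ‖z2‖ + ‖z3‖ + ‖z4‖ := hnorm
    _ ≤ 4 * (|a|+|b|+1) * MS * (W (n-2) + W (n-1) + W (n+1) + W (n+2)) := key
    _ = 4 * (|a|+|b|+1) * (μ^2 * S) * (W (n-2) + W (n-1) + W (n+1) + W (n+2)) := rfl

lemma kratio {k0 μ α : ℝ} (hk0 : 0 < k0) (hμ : 1 < μ) (hα0 : 0 ≤ α) (hα : α ≤ 1/2)
    {m j : ℕ} (h : m ≤ j + 2) :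
    kseq k0 μ m ^ (4*α) ≤ μ^4 * kseq k0 μ j ^ (4*α) := by
  have h1 : kseq k0 μ m ≤ μ^2 * kseq k0 μ j := kle hk0 hμ h
  have h2 : kseq k0 μ m ^ (4*α) ≤ (μ^2 * kseq k0 μ j) ^ (4*α) :=
    Real.rpow_le_rpow (le_of_lt (kpos hk0 hμ m)) h1 (by positivity)
  rw [Real.mul_rpow (by positivity) (le_of_lt (kpos hk0 hμ j))] at h2
  have h3 : (μ^2:ℝ)^(4*α) ≤ (μ^2:ℝ)^(2:ℝ) := by
    apply Real.rpow_le_rpow_of_exponent_le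
    · nlinarith
    · linarith
  have h4 : (μ^2:ℝ)^(2:ℝ) = μ^4 := by
    rw [show ((2:ℝ)) = ((2:ℕ):ℝ) by norm_num, Real.rpow_natCast]; ring
  have h5 : (0:ℝ) ≤ kseq k0 μ j ^ (4*α) := Real.rpow_nonneg (le_of_lt (kpos hk0 hμ j)) _
  calc kseq k0 μ m ^ (4*α) ≤ (μ^2:ℝ)^(4*α) * kseq k0 μ j ^ (4*α) := h2
    _ ≤ (μ^2:ℝ)^(2:ℝ) * kseq k0 μ j ^ (4*α) := mul_le_mul_of_nonneg_right h3 h5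
    _ = μ^4 * kseq k0 μ j ^ (4*α) := by rw [h4]

lemma amgm {k0 μ α : ℝ} (hk0 : 0 < k0) (hμ : 1 < μ) (hα0 : 0 ≤ α) (hα : α ≤ 1/2)
    {m j : ℕ} (h : m ≤ j + 2) (x y : ℝ) (hx : 0 ≤ x) (hy : 0 ≤ y) :
    kseq k0 μ m ^ (4*α) * (x*y) ≤
      μ^4/2 * (kseq k0 μ m ^ (4*α) * x^2 + kseq k0 μ j ^ (4*α) * y^2) := by
  have hr := kratio hk0 hμ hα0 hα h
  have hμ4 : (1:ℝ) ≤ μ^4 := one_le_pow₀ (le_of_lt hμ)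
  have h5 : (0:ℝ) ≤ kseq k0 μ m ^ (4*α) := Real.rpow_nonneg (le_of_lt (kpos hk0 hμ m)) _
  have h6 : (0:ℝ) ≤ kseq k0 μ j ^ (4*α) := Real.rpow_nonneg (le_of_lt (kpos hk0 hμ j)) _
  nlinarith [sq_nonneg (x-y), mul_nonneg h5 (sq_nonneg x), mul_nonneg h6 (sq_nonneg y),
    mul_le_mul_of_nonneg_right hr (sq_nonneg y),
    mul_nonneg h5 (mul_nonneg hx hy), sq_nonneg (x+y),
    mul_le_mul_of_nonneg_left (sq_nonneg (x-y)) h5]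

lemma memV_sub {k0 μ : ℝ} {u v : ℕ → ℂ} (hu : memV k0 μ u) (hv : memV k0 μ v) :
    memV k0 μ (fun n => u n - v n) := by
  unfold memV
  have hg : Summable (fun n : ℕ => 2 * ((kseq k0 μ (n+1))^2 * ‖u (n+1)‖^2
      + (kseq k0 μ (n+1))^2 * ‖v (n+1)‖^2)) := (hu.add hv).mul_left 2
  have hnn : ∀ n : ℕ, (0:ℝ) ≤ (kseq k0 μ (n+1))^2 * ‖u (n+1) - v (n+1)‖^2 :=
    fun n => by positivity
  refine Summable.of_nonneg_of_le hnn ?_ hg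
  · intro n
    have h1 := norm_sub_le (u (n+1)) (v (n+1))
    have h2 : ‖u (n+1) - v (n+1)‖^2 ≤ 2*‖u (n+1)‖^2 + 2*‖v (n+1)‖^2 := by
      nlinarith [norm_nonneg (u (n+1) - v (n+1)), norm_nonneg (u (n+1)),
        norm_nonneg (v (n+1)), sq_nonneg (‖u (n+1)‖ - ‖v (n+1)‖)]
    nlinarith [sq_nonneg (kseq k0 μ (n+1))]

lemma summable_P {k0 μ α : ℝ} (hk0 : 0 < k0) (hμ : 1 < μ) (hα0 : 0 ≤ α) (hα : α ≤ 1/2)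
    {w : ℕ → ℂ} (hw : memV k0 μ w) :
    Summable (fun n : ℕ => kseq k0 μ (n+1) ^ (4*α) * ‖w (n+1)‖^2) := by
  have hg : Summable (fun n : ℕ => (1 + (k0*μ)⁻¹^2) * ((kseq k0 μ (n+1))^2 * ‖w (n+1)‖^2)) :=
    hw.mul_left _
  have hnn : ∀ n : ℕ, (0:ℝ) ≤ kseq k0 μ (n+1) ^ (4*α) * ‖w (n+1)‖^2 := by
    intro n
    have := kpos hk0 hμ (n+1)
    positivity
  refine Summable.of_nonneg_of_le hnn ?_ hg
  · intro n
    have hk := kpos hk0 hμ (n+1)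
    have hk0μ : (0:ℝ) < k0 * μ := mul_pos hk0 (lt_trans one_pos hμ)
    have hge : k0 * μ ≤ kseq k0 μ (n+1) := by
      have h1 : μ ^ 1 ≤ μ ^ (n+1) := pow_le_pow_right₀ (le_of_lt hμ) (by omega)
      calc k0 * μ = k0 * μ ^ 1 := by ring
        _ ≤ k0 * μ ^ (n+1) := by nlinarith
        _ = kseq k0 μ (n+1) := rfl
    have hr : kseq k0 μ (n+1) ^ (4*α) ≤ 1 + (kseq k0 μ (n+1))^2 := by
      rcases le_or_gt (kseq k0 μ (n+1)) 1 with h | h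
      · have := Real.rpow_le_one (le_of_lt hk) h (by positivity : (0:ℝ) ≤ 4*α)
        nlinarith [sq_nonneg (kseq k0 μ (n+1))]
      · have h1 : kseq k0 μ (n+1) ^ (4*α) ≤ kseq k0 μ (n+1) ^ (2:ℝ) :=
          Real.rpow_le_rpow_of_exponent_le (le_of_lt h) (by linarith)
        have h2 : kseq k0 μ (n+1) ^ (2:ℝ) = (kseq k0 μ (n+1))^2 := by
          rw [show ((2:ℝ)) = ((2:ℕ):ℝ) by norm_num, Real.rpow_natCast]
        rw [h2] at h1
        nlinarith
    have hw2 : ‖w (n+1)‖^2 ≤ (k0*μ)⁻¹^2 * ((kseq k0 μ (n+1))^2 * ‖w (n+1)‖^2) := by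
      have h3 : (k0*μ)⁻¹ * (k0*μ) = 1 := inv_mul_cancel₀ (ne_of_gt hk0μ)
      have h4 : 1 ≤ (k0*μ)⁻¹ * kseq k0 μ (n+1) := by
        have h5 : (0:ℝ) < (k0*μ)⁻¹ := by positivity
        nlinarith
      have h5 : 1 ≤ ((k0*μ)⁻¹ * kseq k0 μ (n+1))^2 := by nlinarith
      nlinarith [mul_nonneg (sub_nonneg.mpr h5) (sq_nonneg ‖w (n+1)‖)]
    nlinarith [sq_nonneg ‖w (n+1)‖, sq_nonneg (kseq k0 μ (n+1)),
      mul_nonneg (sq_nonneg (kseq k0 μ (n+1))) (sq_nonneg ‖w (n+1)‖)]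

set_option maxHeartbeats 1000000 in
/-- For `α ∈ [0,1/2]`:
`|(A^α B(u) − A^α B(v), A^α(u−v))| ≤ C ‖u−v‖_α² (‖u‖ + ‖v‖)`. -/
theorem goy_Aalpha_diff_bound (k0 μ a b : ℝ) (hk0 : 0 < k0) (hμ : 1 < μ)
    (α : ℝ) (hα0 : 0 ≤ α) (hα : α ≤ 1/2) :
    ∃ C > (0:ℝ), ∀ u v : ℕ → ℂ,
      u 0 = 0 → v 0 = 0 → memV k0 μ u → memV k0 μ v →
      |pairH (fun n => opAalpha k0 μ α (goyB k0 μ a b u u) n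
                      - opAalpha k0 μ α (goyB k0 μ a b v v) n)
          (opAalpha k0 μ α (fun n => u n - v n))| ≤
        C * aSq k0 μ α (fun n => u n - v n)
          * (Real.sqrt (vSq k0 μ u) + Real.sqrt (vSq k0 μ v)) := by
  have hμ0 : (0:ℝ) < μ := lt_trans one_pos hμ
  refine ⟨16 * (|a|+|b|+1) * μ^6, by positivity, ?_⟩
  intro u v hu0 hv0 hu hv
  set w : ℕ → ℂ := fun n => u n - v n with hwdef
  have hw0 : w 0 = 0 := by simp [hwdef, hu0, hv0]
  have hwV : memV k0 μ w := memV_sub hu hv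
  set S : ℝ := Real.sqrt (vSq k0 μ u) + Real.sqrt (vSq k0 μ v) with hSdef
  have hSnn : 0 ≤ S := add_nonneg (Real.sqrt_nonneg _) (Real.sqrt_nonneg _)
  set P : ℕ → ℝ := fun j => kseq k0 μ j ^ (4*α) * ‖w j‖^2 with hPdef
  have hPnn : ∀ j, 0 ≤ P j := by
    intro j
    have := kpos hk0 hμ j
    simp only [hPdef]
    positivity
  have hP0 : P 0 = 0 := by simp [hPdef, hw0]
  have hP1 : Summable (fun n => P (n+1)) := summable_P hk0 hμ hα0 hα hwV
  have hP : Summable P := (summable_nat_add_iff 1).mp hP1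
  have hPm : Summable (fun n => P (n-1)) := by
    apply (summable_nat_add_iff 1).mp
    simpa using hP
  have hP2 : Summable (fun n => P (n+2)) := (summable_nat_add_iff 2).mpr hP
  have hP3 : Summable (fun n => P (n+3)) := (summable_nat_add_iff 3).mpr hP
  set A : ℝ := ∑' n : ℕ, P (n+1) with hAdef
  have hAnn : 0 ≤ A := tsum_nonneg (fun n => hPnn _)
  have haSq : aSq k0 μ α w = A := rfl
  -- tsum identities
  have tP : ∑' n : ℕ, P n = A := by
    rw [Summable.tsum_eq_zero_add hP, hP0, zero_add]
  have tPm : ∑' n : ℕ, P (n-1) = A := by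
    rw [Summable.tsum_eq_zero_add hPm]
    simp only [Nat.add_sub_cancel, Nat.zero_sub, hP0, zero_add]
    exact tP
  have tP2 : ∑' n : ℕ, P (n+2) ≤ A := by
    have h := Summable.tsum_eq_zero_add hP1
    have he : ∀ n : ℕ, n + 1 + 1 = n + 2 := fun n => by omega
    simp only [he] at h
    have := hPnn 1
    rw [← hAdef] at h
    linarith [h]
  have tP3 : ∑' n : ℕ, P (n+3) ≤ A := by
    have h := Summable.tsum_eq_zero_add hP2
    have he : ∀ n : ℕ, n + 1 + 2 = n + 3 := fun n => by omega
    simp only [he] at h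
    have := hPnn 2
    linarith [h, tP2]
  -- pointwise machinery
  have hwj : ∀ j, u j - v j = w j := fun j => rfl
  have hPj : ∀ j, kseq k0 μ j ^ (4*α) * ‖w j‖^2 = P j := fun j => rfl
  set Kg : ℝ := 2*(|a|+|b|+1)*μ^6*S with hKgdef
  have hKgnn : 0 ≤ Kg := by
    rw [hKgdef]
    exact mul_nonneg (by positivity) hSnn
  set f : ℕ → ℝ := fun n => ((opAalpha k0 μ α (goyB k0 μ a b u u) (n+1)
      - opAalpha k0 μ α (goyB k0 μ a b v v) (n+1))
      * conj (opAalpha k0 μ α w (n+1))).re with hfdef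
  set g : ℕ → ℝ := fun n =>
      Kg * (4*P (n+1) + (P (n-1) + P n + P (n+2) + P (n+3))) with hgdef
  have hfg : ∀ n, |f n| ≤ g n := by
    intro n
    have hkp := kpos hk0 hμ (n+1)
    have hkr : (0:ℝ) ≤ kseq k0 μ (n+1) ^ (2*α) := Real.rpow_nonneg (le_of_lt hkp) _
    have hkr4 : (0:ℝ) ≤ kseq k0 μ (n+1) ^ (4*α) := Real.rpow_nonneg (le_of_lt hkp) _
    set X : ℂ := opAalpha k0 μ α (goyB k0 μ a b u u) (n+1)
      - opAalpha k0 μ α (goyB k0 μ a b v v) (n+1) with hXdef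
    set Y : ℂ := opAalpha k0 μ α w (n+1) with hYdef
    set Dn : ℂ := goyB k0 μ a b u u (n+1) - goyB k0 μ a b v v (n+1) with hDndef
    have hx : X = ((kseq k0 μ (n+1) ^ (2*α) : ℝ) : ℂ) * Dn := by
      simp only [hXdef, hDndef, opAalpha]; ring
    have hxn : ‖X‖ = kseq k0 μ (n+1) ^ (2*α) * ‖Dn‖ := by
      rw [hx, norm_mul, Complex.norm_real, Real.norm_eq_abs, abs_of_nonneg hkr]
    have hyn : ‖Y‖ = kseq k0 μ (n+1) ^ (2*α) * ‖w (n+1)‖ := by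
      simp only [hYdef, opAalpha]
      rw [norm_mul, Complex.norm_real, Real.norm_eq_abs, abs_of_nonneg hkr]
    have habs : |f n| ≤ ‖X‖ * ‖Y‖ := by
      have h1 : |f n| ≤ ‖X * conj Y‖ := by
        exact Complex.abs_re_le_norm (X * conj Y)
      rw [norm_mul, RCLike.norm_conj] at h1
      exact h1
    have hkk : kseq k0 μ (n+1) ^ (2*α) * kseq k0 μ (n+1) ^ (2*α)
        = kseq k0 μ (n+1) ^ (4*α) := by
      rw [← Real.rpow_add hkp]; ring_nf
    have hDb := Dbound (a := a) (b := b) hk0 hμ hu0 hv0 hu hv (n+1)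
    rw [← hDndef] at hDb
    simp only [hwj, ← hSdef] at hDb
    have e1 := amgm (k0 := k0) (μ := μ) hk0 hμ hα0 hα
      (show n+1 ≤ (n+1-2) + 2 by omega) ‖w (n+1)‖ ‖w (n+1-2)‖ (norm_nonneg _) (norm_nonneg _)
    have e2 := amgm (k0 := k0) (μ := μ) hk0 hμ hα0 hα
      (show n+1 ≤ (n+1-1) + 2 by omega) ‖w (n+1)‖ ‖w (n+1-1)‖ (norm_nonneg _) (norm_nonneg _)
    have e3 := amgm (k0 := k0) (μ := μ) hk0 hμ hα0 hα
      (show n+1 ≤ (n+1+1) + 2 by omega) ‖w (n+1)‖ ‖w (n+1+1)‖ (norm_nonneg _) (norm_nonneg _)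
    have e4 := amgm (k0 := k0) (μ := μ) hk0 hμ hα0 hα
      (show n+1 ≤ (n+1+2) + 2 by omega) ‖w (n+1)‖ ‖w (n+1+2)‖ (norm_nonneg _) (norm_nonneg _)
    simp only [hPj] at e1 e2 e3 e4
    have i1 : n+1-2 = n-1 := by omega
    have i2 : n+1-1 = n := by omega
    have i3 : n+1+1 = n+2 := by omega
    have i4 : n+1+2 = n+3 := by omega
    rw [i1] at e1 hDb
    rw [i2] at e2 hDb
    rw [i3] at e3 hDb
    rw [i4] at e4 hDb
    have csum : kseq k0 μ (n+1) ^ (4*α) *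
        (‖w (n+1)‖ * (‖w (n-1)‖ + ‖w n‖ + ‖w (n+2)‖ + ‖w (n+3)‖))
        ≤ μ^4/2 * (4*P (n+1) + (P (n-1) + P n + P (n+2) + P (n+3))) := by
      linarith [e1, e2, e3, e4]
    have K1nn : (0:ℝ) ≤ 4*(|a|+|b|+1)*(μ^2*S) := by
      exact mul_nonneg (by positivity) (mul_nonneg (by positivity) hSnn)
    calc |f n| ≤ ‖X‖ * ‖Y‖ := habs
      _ = kseq k0 μ (n+1) ^ (4*α) * (‖Dn‖ * ‖w (n+1)‖) := by
          rw [hxn, hyn, ← hkk]; ring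
      _ ≤ kseq k0 μ (n+1) ^ (4*α) *
          ((4*(|a|+|b|+1)*(μ^2*S) * (‖w (n-1)‖ + ‖w n‖ + ‖w (n+2)‖ + ‖w (n+3)‖))
            * ‖w (n+1)‖) := by
          apply mul_le_mul_of_nonneg_left _ hkr4
          exact mul_le_mul_of_nonneg_right hDb (norm_nonneg _)
      _ = 4*(|a|+|b|+1)*(μ^2*S) * (kseq k0 μ (n+1) ^ (4*α) *
            (‖w (n+1)‖ * (‖w (n-1)‖ + ‖w n‖ + ‖w (n+2)‖ + ‖w (n+3)‖))) := by ring
      _ ≤ 4*(|a|+|b|+1)*(μ^2*S) *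
            (μ^4/2 * (4*P (n+1) + (P (n-1) + P n + P (n+2) + P (n+3)))) :=
          mul_le_mul_of_nonneg_left csum K1nn
      _ = g n := by simp only [hgdef, hKgdef]; ring
  -- summability of g
  have hrest : Summable (fun n => P (n-1) + P n + P (n+2) + P (n+3)) :=
    ((hPm.add hP).add hP2).add hP3
  have hinner : Summable (fun n => 4*P (n+1) + (P (n-1) + P n + P (n+2) + P (n+3))) :=
    (hP1.mul_left 4).add hrest
  have hg : Summable g := hinner.mul_left Kg
  have t_total : ∑' n : ℕ, (4*P (n+1) + (P (n-1) + P n + P (n+2) + P (n+3))) ≤ 8 * A := by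
    rw [Summable.tsum_add (hP1.mul_left 4) hrest, Summable.tsum_add ((hPm.add hP).add hP2) hP3,
      Summable.tsum_add (hPm.add hP) hP2, Summable.tsum_add hPm hP, tsum_mul_left, tPm, tP]
    linarith [tP2, tP3]
  have tg : ∑' n : ℕ, g n ≤ Kg * (8 * A) := by
    rw [hgdef, tsum_mul_left]
    exact mul_le_mul_of_nonneg_left t_total hKgnn
  -- final assembly
  have habsS : Summable (fun n => |f n|) :=
    Summable.of_nonneg_of_le (fun n => abs_nonneg _) hfg hg
  have hpair : pairH (fun n => opAalpha k0 μ α (goyB k0 μ a b u u) n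
      - opAalpha k0 μ α (goyB k0 μ a b v v) n) (opAalpha k0 μ α w)
      = ∑' n : ℕ, f n := rfl
  rw [hpair, haSq]
  have h1 : |∑' n : ℕ, f n| ≤ ∑' n : ℕ, |f n| := by
    have := norm_tsum_le_tsum_norm (f := f) (by simpa [Real.norm_eq_abs] using habsS)
    simpa [Real.norm_eq_abs] using this
  have h2 : ∑' n : ℕ, |f n| ≤ ∑' n : ℕ, g n := Summable.tsum_le_tsum hfg habsS hg
  calc |∑' n : ℕ, f n| ≤ ∑' n : ℕ, g n := le_trans h1 h2
    _ ≤ Kg * (8 * A) := tg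
    _ = 16 * (|a|+|b|+1) * μ^6 * A * S := by rw [hKgdef]; ring
end
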